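/- Let P > 0 be fixed, ε > 1, B(N) = ⌈N^ε⌉, and G_N = (1/N)∑_{r=0}^{N-1}|H_r|² with H_r i.i.d. standard complex Gaussian. Then B(N)·E[log(1 + P·N·G_N/B(N))] = Θ(N). -/

import Mathlib

/-!
Write `S_N = ∑_{r<N} |H_r|²`, so that the integrand is `log (1 + P S_N / B)` with `B = ⌈N^ε⌉`.
For `x ≥ 0` we have `x - x² ≤ log (1 + x) ≤ x`, which reduces the expectation to the first two
moments of `S_N`, a sum of `N` independent Exp(1) variables: `E S_N = N` and
`E S_N² = Var S_N + N² = N + N²`. Hence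
`P - P² (N + 1) / B ≤ B · E[log (1 + P S_N / B)] / N ≤ P`, and `(N + 1) / B → 0` because `ε > 1`,
so the normalized capacity even tends to `P`.
-/

open Filter MeasureTheory ProbabilityTheory

noncomputable def expOneMeasure : Measure ℝ :=
  volume.withDensity fun x => ENNReal.ofReal (if 0 ≤ x then Real.exp (-x) else 0)

open Real Set Topology
open scoped NNReal ENNReal

lemma Real.sub_sq_le_log_one_add {x : ℝ} (hx : 0 ≤ x) : x - x ^ 2 ≤ log (1 + x) := by
  have hx1 : 0 < 1 + x := by linarith
  calc x - x ^ 2 ≤ 1 - (1 + x)⁻¹ := by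
        rw [← sub_nonneg]
        have : 1 - (1 + x)⁻¹ - (x - x ^ 2) = x ^ 3 / (1 + x) := by field_simp; ring
        rw [this]; positivity
    _ ≤ log (1 + x) := one_sub_inv_le_log_of_pos hx1

section LogOneAdd

variable {Ω : Type*} [MeasurableSpace Ω] {μ : Measure Ω} {Y : Ω → ℝ}

lemma integrable_log_one_add (hY : Integrable Y μ) (h0 : ∀ᵐ ω ∂μ, 0 ≤ Y ω) :
    Integrable (fun ω => log (1 + Y ω)) μ := by
  refine hY.mono' ?_ ?_
  · exact (measurable_log.comp_aemeasurable (aemeasurable_const.add hY.aemeasurable))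
      |>.aestronglyMeasurable
  · filter_upwards [h0] with ω hω
    rw [norm_of_nonneg (log_nonneg (by linarith))]
    linarith [log_le_sub_one_of_pos (show 0 < 1 + Y ω by linarith)]

lemma integral_log_one_add_le (hY : Integrable Y μ) (h0 : ∀ᵐ ω ∂μ, 0 ≤ Y ω) :
    ∫ ω, log (1 + Y ω) ∂μ ≤ ∫ ω, Y ω ∂μ := by
  refine integral_mono_ae (integrable_log_one_add hY h0) hY ?_
  filter_upwards [h0] with ω hω
  linarith [log_le_sub_one_of_pos (show 0 < 1 + Y ω by linarith)]

lemma integral_sub_integral_sq_le_integral_log_one_add [IsFiniteMeasure μ] (hY : MemLp Y 2 μ)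
    (h0 : ∀ᵐ ω ∂μ, 0 ≤ Y ω) :
    ∫ ω, Y ω ∂μ - ∫ ω, Y ω ^ 2 ∂μ ≤ ∫ ω, log (1 + Y ω) ∂μ := by
  have hY1 := hY.integrable one_le_two
  rw [← integral_sub hY1 hY.integrable_sq]
  refine integral_mono_ae (hY1.sub hY.integrable_sq) (integrable_log_one_add hY1 h0) ?_
  filter_upwards [h0] with ω hω
  exact sub_sq_le_log_one_add hω

end LogOneAdd

lemma tendsto_add_one_div_ceil_rpow {ε : ℝ} (hε : 1 < ε) :
    Tendsto (fun N : ℕ => ((N : ℝ) + 1) / ⌈(N : ℝ) ^ ε⌉₊) atTop (𝓝 0) := by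
  have hlim : Tendsto (fun N : ℕ => 2 * (N : ℝ) ^ (1 - ε)) atTop (𝓝 0) := by
    have h := (tendsto_rpow_neg_atTop (y := ε - 1) (by linarith)).comp tendsto_natCast_atTop_atTop
    simpa [neg_sub] using h.const_mul 2
  refine tendsto_of_tendsto_of_tendsto_of_le_of_le' tendsto_const_nhds hlim
    (Eventually.of_forall fun N => by positivity) ?_
  filter_upwards [eventually_ge_atTop 1] with N hN
  have hN0 : (0 : ℝ) < N := by exact_mod_cast hN
  have hN1 : (1 : ℝ) ≤ N := by exact_mod_cast hN
  calc ((N : ℝ) + 1) / ⌈(N : ℝ) ^ ε⌉₊ ≤ (2 * N) / (N : ℝ) ^ ε :=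
        div_le_div₀ (by positivity) (by linarith) (by positivity) (Nat.le_ceil _)
    _ = 2 * (N : ℝ) ^ (1 - ε) := by
        rw [rpow_sub hN0, rpow_one]; ring

noncomputable def expOneDensity (x : ℝ) : ℝ≥0 :=
  (indicator (Ici 0) (fun x => exp (-x)) x).toNNReal

lemma expOneMeasure_eq_withDensity :
    expOneMeasure = volume.withDensity fun x => (expOneDensity x : ℝ≥0∞) := by
  simp only [expOneMeasure, expOneDensity, indicator_apply, mem_Ici]
  rfl

lemma measurable_expOneDensity : Measurable expOneDensity :=
  ((measurable_exp.comp measurable_neg).indicator measurableSet_Ici).real_toNNReal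

lemma expOneDensity_smul (g : ℝ → ℝ) :
    (fun x => expOneDensity x • g x) = indicator (Ici 0) (fun x => exp (-x) * g x) := by
  ext x
  by_cases hx : x ∈ Ici (0 : ℝ)
  · simp [expOneDensity, hx, NNReal.smul_def, (exp_pos _).le]
  · simp [expOneDensity, hx]

lemma integrable_expOneMeasure_iff {g : ℝ → ℝ} :
    Integrable g expOneMeasure ↔ IntegrableOn (fun x => exp (-x) * g x) (Ioi 0) := by
  rw [expOneMeasure_eq_withDensity,
    integrable_withDensity_iff_integrable_smul measurable_expOneDensity, expOneDensity_smul,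
    integrable_indicator_iff measurableSet_Ici, integrableOn_Ici_iff_integrableOn_Ioi]

lemma integral_expOneMeasure (g : ℝ → ℝ) :
    ∫ x, g x ∂expOneMeasure = ∫ x in Ioi 0, exp (-x) * g x := by
  rw [expOneMeasure_eq_withDensity, integral_withDensity_eq_integral_smul measurable_expOneDensity,
    expOneDensity_smul, integral_indicator measurableSet_Ici, integral_Ici_eq_integral_Ioi]

lemma ae_nonneg_expOneMeasure : ∀ᵐ x ∂expOneMeasure, 0 ≤ x := by
  rw [expOneMeasure_eq_withDensity, ae_withDensity_iff measurable_expOneDensity.coe_nnreal_ennreal]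
  filter_upwards with x hx
  by_contra h
  exact hx (by simp [expOneDensity, h])

lemma integrable_pow_expOneMeasure (n : ℕ) : Integrable (fun x => x ^ n) expOneMeasure := by
  have h := GammaIntegral_convergent (s := n + 1) (by positivity)
  simp only [add_sub_cancel_right, rpow_natCast] at h
  rwa [integrable_expOneMeasure_iff]

lemma integral_pow_expOneMeasure (n : ℕ) : ∫ x, x ^ n ∂expOneMeasure = n.factorial := by
  have h := Gamma_eq_integral (s := n + 1) (by positivity)
  simp only [add_sub_cancel_right, rpow_natCast, Gamma_nat_eq_factorial] at h
  rw [integral_expOneMeasure, h]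

section ExpOneLaw

variable {Ω : Type*} [MeasurableSpace Ω] {μ : Measure Ω} {X : Ω → ℝ}

lemma ae_nonneg_of_map_eq_expOneMeasure (hX : AEMeasurable X μ)
    (hlaw : μ.map X = expOneMeasure) : ∀ᵐ ω ∂μ, 0 ≤ X ω :=
  ae_of_ae_map hX (hlaw ▸ ae_nonneg_expOneMeasure)

lemma integrable_pow_of_map_eq_expOneMeasure (hX : AEMeasurable X μ)
    (hlaw : μ.map X = expOneMeasure) (n : ℕ) : Integrable (fun ω => X ω ^ n) μ := by
  have h := integrable_pow_expOneMeasure n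
  rw [← hlaw] at h
  exact (integrable_map_measure (continuous_pow n).aestronglyMeasurable hX).1 h

lemma integral_pow_of_map_eq_expOneMeasure (hX : AEMeasurable X μ)
    (hlaw : μ.map X = expOneMeasure) (n : ℕ) : ∫ ω, X ω ^ n ∂μ = n.factorial := by
  rw [← integral_pow_expOneMeasure n, ← hlaw,
    integral_map hX (continuous_pow n).aestronglyMeasurable]

lemma integrable_of_map_eq_expOneMeasure (hX : AEMeasurable X μ)
    (hlaw : μ.map X = expOneMeasure) : Integrable X μ := by
  simpa using integrable_pow_of_map_eq_expOneMeasure hX hlaw 1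

lemma integral_of_map_eq_expOneMeasure (hX : AEMeasurable X μ)
    (hlaw : μ.map X = expOneMeasure) : ∫ ω, X ω ∂μ = 1 := by
  simpa using integral_pow_of_map_eq_expOneMeasure hX hlaw 1

lemma memLp_two_of_map_eq_expOneMeasure (hX : AEMeasurable X μ)
    (hlaw : μ.map X = expOneMeasure) : MemLp X 2 μ :=
  (memLp_two_iff_integrable_sq hX.aestronglyMeasurable).2
    (integrable_pow_of_map_eq_expOneMeasure hX hlaw 2)

lemma variance_of_map_eq_expOneMeasure [IsProbabilityMeasure μ] (hX : AEMeasurable X μ)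
    (hlaw : μ.map X = expOneMeasure) : Var[X; μ] = 1 := by
  rw [variance_eq_sub (memLp_two_of_map_eq_expOneMeasure hX hlaw)]
  simp only [Pi.pow_apply, integral_pow_of_map_eq_expOneMeasure hX hlaw,
    integral_of_map_eq_expOneMeasure hX hlaw]
  norm_num

end ExpOneLaw

section SumExpOne

variable {Ω : Type*} [MeasurableSpace Ω] {μ : Measure Ω} {X : ℕ → Ω → ℝ}

lemma integral_sum_range_of_map_eq_expOneMeasure (hX : ∀ r, AEMeasurable (X r) μ)
    (hlaw : ∀ r, μ.map (X r) = expOneMeasure) (N : ℕ) :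
    ∫ ω, ∑ r ∈ Finset.range N, X r ω ∂μ = N := by
  rw [integral_finsetSum _ fun r _ => integrable_of_map_eq_expOneMeasure (hX r) (hlaw r)]
  simp [integral_of_map_eq_expOneMeasure (hX _) (hlaw _)]

lemma integral_sq_sum_range_of_map_eq_expOneMeasure [IsProbabilityMeasure μ]
    (hX : ∀ r, AEMeasurable (X r) μ) (hlaw : ∀ r, μ.map (X r) = expOneMeasure)
    (hindep : iIndepFun X μ) (N : ℕ) :
    ∫ ω, (∑ r ∈ Finset.range N, X r ω) ^ 2 ∂μ = N ^ 2 + N := by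
  have hL2 : ∀ r ∈ Finset.range N, MemLp (X r) 2 μ := fun r _ =>
    memLp_two_of_map_eq_expOneMeasure (hX r) (hlaw r)
  have hvar : Var[∑ r ∈ Finset.range N, X r; μ] = N := by
    rw [IndepFun.variance_sum hL2 fun i _ j _ hij => hindep.indepFun hij]
    simp [variance_of_map_eq_expOneMeasure (hX _) (hlaw _)]
  rw [variance_eq_sub (memLp_finsetSum' _ hL2)] at hvar
  simp only [Pi.pow_apply, Finset.sum_apply,
    integral_sum_range_of_map_eq_expOneMeasure hX hlaw] at hvar
  linarith

lemma mul_integral_log_one_add_sum_range_mem_Icc [IsProbabilityMeasure μ]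
    (hX : ∀ r, AEMeasurable (X r) μ) (hlaw : ∀ r, μ.map (X r) = expOneMeasure)
    (hindep : iIndepFun X μ) {P b : ℝ} (hP : 0 ≤ P) (hb : 0 < b) (N : ℕ) :
    b * ∫ ω, log (1 + P * (∑ r ∈ Finset.range N, X r ω) / b) ∂μ ∈
      Icc (P * N - P ^ 2 * (N ^ 2 + N) / b) (P * N) := by
  set S : Ω → ℝ := fun ω => ∑ r ∈ Finset.range N, X r ω
  have hS2 : MemLp S 2 μ := memLp_finsetSum _ fun r _ =>
    memLp_two_of_map_eq_expOneMeasure (hX r) (hlaw r)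
  have hS0 : ∀ᵐ ω ∂μ, 0 ≤ S ω := by
    filter_upwards [ae_all_iff.2 fun r => ae_nonneg_of_map_eq_expOneMeasure (hX r) (hlaw r)]
      with ω hω
    exact Finset.sum_nonneg fun r _ => hω r
  have hY2 : MemLp (fun ω => P / b * S ω) 2 μ := hS2.const_mul _
  have hY0 : ∀ᵐ ω ∂μ, 0 ≤ P / b * S ω := by
    filter_upwards [hS0] with ω hω
    positivity
  have hmean : ∫ ω, P / b * S ω ∂μ = P / b * N := by
    rw [integral_const_mul, integral_sum_range_of_map_eq_expOneMeasure hX hlaw]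
  have hsq : ∫ ω, (P / b * S ω) ^ 2 ∂μ = (P / b) ^ 2 * (N ^ 2 + N) := by
    simp_rw [mul_pow]
    rw [integral_const_mul, integral_sq_sum_range_of_map_eq_expOneMeasure hX hlaw hindep]
  simp_rw [mul_div_right_comm P]
  constructor
  · have h := integral_sub_integral_sq_le_integral_log_one_add hY2 hY0
    rw [hmean, hsq] at h
    calc P * N - P ^ 2 * (N ^ 2 + N) / b = b * (P / b * N - (P / b) ^ 2 * (N ^ 2 + N)) := by
          field_simp
      _ ≤ _ := by gcongr
  · have h := integral_log_one_add_le (hY2.integrable one_le_two) hY0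
    rw [hmean] at h
    calc _ ≤ b * (P / b * N) := by gcongr
      _ = P * N := by field_simp

theorem tendsto_ceil_rpow_mul_integral_log_one_add_sum_range [IsProbabilityMeasure μ]
    (hX : ∀ r, AEMeasurable (X r) μ) (hlaw : ∀ r, μ.map (X r) = expOneMeasure)
    (hindep : iIndepFun X μ) {P ε : ℝ} (hP : 0 ≤ P) (hε : 1 < ε) :
    Tendsto (fun N : ℕ => (⌈(N : ℝ) ^ ε⌉₊ : ℝ) *
        (∫ ω, log (1 + P * (∑ r ∈ Finset.range N, X r ω) / ⌈(N : ℝ) ^ ε⌉₊) ∂μ) / N)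
      atTop (𝓝 P) := by
  have hlower : Tendsto (fun N : ℕ => P - P ^ 2 * (((N : ℝ) + 1) / ⌈(N : ℝ) ^ ε⌉₊))
      atTop (𝓝 P) := by
    simpa using tendsto_const_nhds.sub ((tendsto_add_one_div_ceil_rpow hε).const_mul (P ^ 2))
  have hbounds : ∀ᶠ N : ℕ in atTop, (⌈(N : ℝ) ^ ε⌉₊ : ℝ) *
      (∫ ω, log (1 + P * (∑ r ∈ Finset.range N, X r ω) / ⌈(N : ℝ) ^ ε⌉₊) ∂μ) / N ∈
        Icc (P - P ^ 2 * (((N : ℝ) + 1) / ⌈(N : ℝ) ^ ε⌉₊)) P := by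
    filter_upwards [eventually_ge_atTop 1] with N hN
    have hN0 : (0 : ℝ) < N := by exact_mod_cast hN
    have hb : (0 : ℝ) < ⌈(N : ℝ) ^ ε⌉₊ :=
      Nat.cast_pos.2 (Nat.ceil_pos.2 (rpow_pos_of_pos hN0 ε))
    obtain ⟨hlo, hhi⟩ := mul_integral_log_one_add_sum_range_mem_Icc hX hlaw hindep hP hb N
    have hlower_eq : (P - P ^ 2 * (((N : ℝ) + 1) / ⌈(N : ℝ) ^ ε⌉₊)) * N =
        P * N - P ^ 2 * (N ^ 2 + N) / ⌈(N : ℝ) ^ ε⌉₊ := by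
      field_simp
    constructor
    · rw [le_div_iff₀ hN0]; linarith
    · rw [div_le_iff₀ hN0]; linarith
  exact tendsto_of_tendsto_of_tendsto_of_le_of_le' hlower tendsto_const_nhds
    (hbounds.mono fun _ h => h.1) (hbounds.mono fun _ h => h.2)

end SumExpOne

/-- Coherent capacity scaling, bandwidth exponent `ε > 1`:
`B(N) · E[log(1 + P N G_N / B(N))] = Θ(N)` where `B(N) = ⌈N^ε⌉` and
`G_N = (1/N) ∑_{r<N} |H r|²` with the `|H r|²` i.i.d. Exponential(1)
(i.e. `H r` i.i.d. standard complex Gaussian). -/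
theorem stmt_4 {Ω : Type*} [MeasureSpace Ω] [IsProbabilityMeasure (ℙ : Measure Ω)]
    (H : ℕ → Ω → ℂ)
    (hmeas : ∀ r, Measurable (H r))
    (hindep : iIndepFun (fun r ω => ‖H r ω‖ ^ 2) ℙ)
    (hdist : ∀ r, Measure.map (fun ω => ‖H r ω‖ ^ 2) ℙ = expOneMeasure)
    (P : ℝ) (hP : 0 < P) (ε : ℝ) (hε : 1 < ε)
    (B : ℕ → ℕ) (hB : ∀ N, B N = ⌈(N : ℝ) ^ ε⌉₊)
    (G : ℕ → Ω → ℝ)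
    (hG : ∀ N ω, G N ω = (∑ r ∈ Finset.range N, ‖H r ω‖ ^ 2) / N) :
    ∃ c₁ c₂ : ℝ, 0 < c₁ ∧ 0 < c₂ ∧ ∃ N₀ : ℕ, ∀ N > N₀,
      c₁ ≤ ((B N : ℝ) * ∫ ω, Real.log (1 + P * N * G N ω / (B N : ℝ)) ∂(ℙ : Measure Ω))
            / (N : ℝ) ∧
      ((B N : ℝ) * ∫ ω, Real.log (1 + P * N * G N ω / (B N : ℝ)) ∂(ℙ : Measure Ω))
            / (N : ℝ) ≤ c₂ := by
  have hlim := tendsto_ceil_rpow_mul_integral_log_one_add_sum_range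
    (fun r => ((hmeas r).norm.pow_const 2).aemeasurable) hdist hindep hP.le hε
  have hcap : ∀ᶠ N : ℕ in atTop,
      (⌈(N : ℝ) ^ ε⌉₊ *
          ∫ ω, log (1 + P * (∑ r ∈ Finset.range N, ‖H r ω‖ ^ 2) / ⌈(N : ℝ) ^ ε⌉₊)) / N =
        (B N * ∫ ω, log (1 + P * N * G N ω / B N)) / N := by
    filter_upwards [eventually_ge_atTop 1] with N hN
    have hN0 : (N : ℝ) ≠ 0 := by positivity
    simp_rw [hB, hG, mul_assoc P, mul_div_cancel₀ _ hN0]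
  obtain ⟨N₀, hN₀⟩ := eventually_atTop.1
    ((hlim.congr' hcap).eventually (Icc_mem_nhds (half_lt_self hP) (lt_two_mul_self hP)))
  exact ⟨P / 2, 2 * P, by positivity, by positivity, N₀, fun N hN => hN₀ N hN.le⟩
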